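/- arXiv:2209.13938 — 2 statements merged into one kernel-verified Lean document; each statement's English description precedes it below -/
import Mathlib

section
/- Let G be a (2 × n)-game with payoff matrices X¹, X² : Fin 2 → Fin n → ℝ. If X¹ 1 k − X¹ 2 k > 0 for all k ∈ Fin n, then every point p of the correlated equilibrium polytope P_G satisfies p 2 k = 0 for all k; symmetrically, if X¹ 1 k − X¹ 2 k < 0 for all k, then every p ∈ P_G satisfies p 1 k = 0 for all k. In either case P_G does not have maximal dimension, i.e. the dimension of the direction of its affine span is strictly less than 2n − 1. -/
/-!
If every entry of `X¹ j k − X¹ l k` is negative, the incentive constraint for row `j` against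
row `l` is a nonnegative sum of nonpositive terms, so each term, hence each `p j k`, vanishes.
The polytope then lies in the fibre of the surjection `p ↦ (p j k₀, ∑ p)` onto `ℝ²`, which
has codimension `2` in the `2n`-dimensional space.
-/

/-- The correlated equilibrium polytope of a `(2 × n)`-game. -/
def CorrelatedEqPolytope {n : ℕ} (X1 X2 : Fin 2 → Fin n → ℝ) :
    Set (Fin 2 → Fin n → ℝ) :=
  {p | (∀ j k, 0 ≤ p j k) ∧ (∑ j, ∑ k, p j k = 1) ∧
    (∀ k l : Fin 2, 0 ≤ ∑ j, (X1 k j - X1 l j) * p k j) ∧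
    (∀ k l : Fin n, 0 ≤ ∑ i, (X2 i k - X2 i l) * p i k)}

open Module

theorem vectorSpan_le_ker_of_eqOn {k V W : Type*} [Ring k] [AddCommGroup V] [Module k V]
    [AddCommGroup W] [Module k W] (f : V →ₗ[k] W) {S : Set V}
    (hf : ∀ p ∈ S, ∀ q ∈ S, f p = f q) : vectorSpan k S ≤ LinearMap.ker f := by
  rw [vectorSpan_def, Submodule.span_le]
  rintro _ ⟨p, hp, q, hq, rfl⟩
  simp [hf p hp q hq]

theorem finrank_direction_affineSpan_add_finrank_range_le {k V W : Type*} [DivisionRing k]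
    [AddCommGroup V] [Module k V] [FiniteDimensional k V] [AddCommGroup W] [Module k W]
    (f : V →ₗ[k] W) {S : Set V} (hf : ∀ p ∈ S, ∀ q ∈ S, f p = f q) :
    finrank k (affineSpan k S).direction + finrank k (LinearMap.range f) ≤ finrank k V := by
  rw [direction_affineSpan, ← LinearMap.finrank_range_add_finrank_ker f, add_comm]
  exact Nat.add_le_add_left (Submodule.finrank_mono (vectorSpan_le_ker_of_eqOn f hf)) _

theorem finrank_direction_affineSpan_add_two_le {ι κ : Type*} [Fintype ι] [DecidableEq ι]
    [Fintype κ] [DecidableEq κ] {i₀ i₁ : ι} (hi : i₀ ≠ i₁) (k₀ : κ) {S : Set (ι → κ → ℝ)}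
    (hsum : ∀ p ∈ S, ∑ i, ∑ k, p i k = 1) (hzero : ∀ p ∈ S, p i₀ k₀ = 0) :
    finrank ℝ (affineSpan ℝ S).direction + 2 ≤ Fintype.card ι * Fintype.card κ := by
  let total : (ι → κ → ℝ) →ₗ[ℝ] ℝ := ∑ i, ∑ k, LinearMap.proj k ∘ₗ LinearMap.proj i
  let f := (LinearMap.proj k₀ ∘ₗ LinearMap.proj i₀).prod total
  have hf_apply : ∀ p, f p = (p i₀ k₀, ∑ i, ∑ k, p i k) := by simp [f, total]
  have hsurj : Function.Surjective f := by
    rintro ⟨a, b⟩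
    refine ⟨Pi.single i₀ (Pi.single k₀ a) + Pi.single i₁ (Pi.single k₀ (b - a)), ?_⟩
    simp [hf_apply, hi, Finset.sum_add_distrib, Pi.single_apply,
      apply_ite (fun v : κ → ℝ => ∑ k, v k)]
  have hrange : finrank ℝ (LinearMap.range f) = 2 := by
    rw [LinearMap.range_eq_top.mpr hsurj, finrank_top, finrank_prod, finrank_self]
  have hf : ∀ p ∈ S, ∀ q ∈ S, f p = f q := fun p hp q hq => by
    rw [hf_apply, hf_apply, hsum p hp, hsum q hq, hzero p hp, hzero q hq]
  simpa [hrange, finrank_pi_fintype, finrank_fintype_fun_eq_card, Finset.sum_const]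
    using finrank_direction_affineSpan_add_finrank_range_le f hf

theorem eq_zero_of_sum_mul_nonneg_of_neg {κ : Type*} [Fintype κ] {c p : κ → ℝ}
    (hc : ∀ k, c k < 0) (hp : ∀ k, 0 ≤ p k) (h : 0 ≤ ∑ k, c k * p k) (k : κ) : p k = 0 := by
  have hterm : ∀ j ∈ Finset.univ, c j * p j ≤ 0 :=
    fun j _ => mul_nonpos_of_nonpos_of_nonneg (hc j).le (hp j)
  have hsum : ∑ j, c j * p j = 0 := le_antisymm (Finset.sum_nonpos hterm) h
  have hk := (Finset.sum_eq_zero_iff_of_nonpos hterm).mp hsum k (Finset.mem_univ k)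
  exact (mul_eq_zero.mp hk).resolve_left (hc k).ne

theorem CorrelatedEqPolytope.row_eq_zero {n : ℕ} {X1 X2 : Fin 2 → Fin n → ℝ} {j l : Fin 2}
    (hX : ∀ k, X1 j k - X1 l k < 0) {p : Fin 2 → Fin n → ℝ}
    (hp : p ∈ CorrelatedEqPolytope X1 X2) (k : Fin n) : p j k = 0 :=
  eq_zero_of_sum_mul_nonneg_of_neg hX (hp.1 j) (hp.2.2.1 j l) k

/-- If player 1's payoff differences `X¹ 1 k − X¹ 2 k` all have the same (nonzero) sign,
then a whole row of coordinates vanishes on the correlated equilibrium polytope, and the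
polytope does not have maximal dimension `2n − 1`. -/
theorem row_sign_forces_vanishing_row_and_not_maximal_dim
    {n : ℕ} (hn : 1 ≤ n) (X1 X2 : Fin 2 → Fin n → ℝ) :
    ((∀ k, 0 < X1 0 k - X1 1 k) →
      ∀ p ∈ CorrelatedEqPolytope X1 X2, ∀ k, p 1 k = 0) ∧
    ((∀ k, X1 0 k - X1 1 k < 0) →
      ∀ p ∈ CorrelatedEqPolytope X1 X2, ∀ k, p 0 k = 0) ∧
    (((∀ k, 0 < X1 0 k - X1 1 k) ∨ (∀ k, X1 0 k - X1 1 k < 0)) →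
      Module.finrank ℝ (affineSpan ℝ (CorrelatedEqPolytope X1 X2)).direction
        < 2 * n - 1) := by
  have hrow1 : (∀ k, 0 < X1 0 k - X1 1 k) →
      ∀ p ∈ CorrelatedEqPolytope X1 X2, ∀ k, p 1 k = 0 := fun h _ hp =>
    CorrelatedEqPolytope.row_eq_zero (l := 0) (fun k => by linarith [h k]) hp
  have hrow0 : (∀ k, X1 0 k - X1 1 k < 0) →
      ∀ p ∈ CorrelatedEqPolytope X1 X2, ∀ k, p 0 k = 0 := fun h _ hp =>
    CorrelatedEqPolytope.row_eq_zero h hp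
  have hdim : ∀ {j₀ j₁ : Fin 2}, j₀ ≠ j₁ →
      (∀ p ∈ CorrelatedEqPolytope X1 X2, ∀ k, p j₀ k = 0) →
      finrank ℝ (affineSpan ℝ (CorrelatedEqPolytope X1 X2)).direction < 2 * n - 1 := by
    intro j₀ j₁ hj hzero
    have := finrank_direction_affineSpan_add_two_le hj ⟨0, hn⟩ (fun p hp => hp.2.1)
      (fun p hp => hzero p hp _)
    simp only [Fintype.card_fin] at this
    omega
  refine ⟨hrow1, hrow0, ?_⟩
  rintro (h | h)
  · exact hdim (j₁ := 0) (by decide) (hrow1 h)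
  · exact hdim (j₁ := 1) (by decide) (hrow0 h)
end

section
/- Let G be a (2 × n)-game with payoff matrices X¹, X² : Fin 2 → Fin n → ℝ, and fix a strategy m ∈ Fin n of player 2. If X² i k − X² i m > 0 for both i ∈ Fin 2 and all k ∈ Fin n with k ≠ m, then every point p of the correlated equilibrium polytope P_G satisfies p 1 m = p 2 m = 0; symmetrically, if X² i k − X² i m < 0 for both i and all k ≠ m, then every p ∈ P_G satisfies p 1 k = p 2 k = 0 for all k ≠ m. In either case P_G does not have maximal dimension, i.e. the dimension of the direction of its affine span is strictly less than 2n − 1. -/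
open Finset Module

lemma eq_zero_of_sum_mul_nonneg_of_neg_s6 {ι : Type*} [Fintype ι] {a p : ι → ℝ}
    (ha : ∀ i, a i < 0) (hp : ∀ i, 0 ≤ p i) (h : 0 ≤ ∑ i, a i * p i) (i : ι) : p i = 0 := by
  have hterm : ∀ j ∈ univ, a j * p j ≤ 0 :=
    fun j _ => mul_nonpos_of_nonpos_of_nonneg (ha j).le (hp j)
  have hsum : ∑ j, a j * p j = 0 := le_antisymm (sum_nonpos hterm) h
  exact (mul_eq_zero.1 ((sum_eq_zero_iff_of_nonpos hterm).1 hsum i (mem_univ i))).resolve_left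
    (ha i).ne

lemma CorrelatedEqPolytope.eq_zero_of_strictly_dominated {n : ℕ} {X1 X2 : Fin 2 → Fin n → ℝ}
    {p : Fin 2 → Fin n → ℝ} (hp : p ∈ CorrelatedEqPolytope X1 X2) {k l : Fin n}
    (hkl : ∀ i, X2 i k - X2 i l < 0) (i : Fin 2) : p i k = 0 :=
  eq_zero_of_sum_mul_nonneg_of_neg_s6 hkl (fun i => hp.1 i k) (hp.2.2.2 k l) i

lemma finrank_direction_affineSpan_add_finrank_le {K V W : Type*} [Field K] [AddCommGroup V]
    [Module K V] [FiniteDimensional K V] [AddCommGroup W] [Module K W] {L : V →ₗ[K] W}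
    (hL : Function.Surjective L) {S : Set V} {w : W} (hS : ∀ p ∈ S, L p = w) :
    finrank K (affineSpan K S).direction + finrank K W ≤ finrank K V := by
  have hker : (affineSpan K S).direction ≤ LinearMap.ker L := by
    rw [direction_affineSpan, vectorSpan_def, Submodule.span_le]
    rintro _ ⟨p, hp, q, hq, rfl⟩
    simp [hS p hp, hS q hq]
  have hrank := L.finrank_range_add_finrank_ker
  rw [LinearMap.range_eq_top.2 hL, finrank_top] at hrank
  have := Submodule.finrank_mono hker
  omega

def entryAndTotal {ι κ : Type*} [Fintype ι] [Fintype κ] (i : ι) (c : κ) :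
    (ι → κ → ℝ) →ₗ[ℝ] ℝ × ℝ :=
  ((LinearMap.proj c).comp (LinearMap.proj i)).prod
    (∑ j, ∑ k, (LinearMap.proj k).comp (LinearMap.proj j))

@[simp]
lemma entryAndTotal_apply {ι κ : Type*} [Fintype ι] [Fintype κ] (i : ι) (c : κ)
    (p : ι → κ → ℝ) : entryAndTotal i c p = (p i c, ∑ j, ∑ k, p j k) := by
  simp [entryAndTotal]

lemma entryAndTotal_surjective {ι κ : Type*} [Fintype ι] [Fintype κ] [DecidableEq ι]
    [DecidableEq κ] {i j : ι} (hij : i ≠ j) (c : κ) :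
    Function.Surjective (entryAndTotal i c) := by
  rintro ⟨a, b⟩
  refine ⟨fun j' => Pi.single c ((Pi.single i a + Pi.single j (b - a) : ι → ℝ) j'), ?_⟩
  simp [hij, sum_pi_single', sum_add_distrib]

lemma finrank_direction_affineSpan_lt_of_entry_eq_zero {n : ℕ} {S : Set (Fin 2 → Fin n → ℝ)}
    {c : Fin n} (hc : ∀ p ∈ S, p 0 c = 0) (htotal : ∀ p ∈ S, ∑ j, ∑ k, p j k = 1) :
    finrank ℝ (affineSpan ℝ S).direction < 2 * n - 1 := by
  classical
  have := finrank_direction_affineSpan_add_finrank_le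
    (entryAndTotal_surjective (zero_ne_one : (0 : Fin 2) ≠ 1) c) (S := S) (w := (0, 1))
    fun p hp => by simp [hc p hp, htotal p hp]
  simp only [finrank_prod, finrank_self, finrank_pi_fintype, sum_const, card_univ,
    Fintype.card_fin, smul_eq_mul] at this
  have := c.pos
  omega

/-- If player 2's payoff differences against a fixed strategy `m` all have the same
(nonzero) sign, then certain columns of coordinates vanish on the correlated equilibrium
polytope, and the polytope does not have maximal dimension `2n − 1`. -/
theorem column_sign_forces_vanishing_and_not_maximal_dim
    {n : ℕ} (hn : 2 ≤ n) (X1 X2 : Fin 2 → Fin n → ℝ) (m : Fin n) :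
    ((∀ (i : Fin 2) (k : Fin n), k ≠ m → 0 < X2 i k - X2 i m) →
      ∀ p ∈ CorrelatedEqPolytope X1 X2, p 0 m = 0 ∧ p 1 m = 0) ∧
    ((∀ (i : Fin 2) (k : Fin n), k ≠ m → X2 i k - X2 i m < 0) →
      ∀ p ∈ CorrelatedEqPolytope X1 X2, ∀ k : Fin n, k ≠ m → p 0 k = 0 ∧ p 1 k = 0) ∧
    (((∀ (i : Fin 2) (k : Fin n), k ≠ m → 0 < X2 i k - X2 i m) ∨
        (∀ (i : Fin 2) (k : Fin n), k ≠ m → X2 i k - X2 i m < 0)) →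
      Module.finrank ℝ (affineSpan ℝ (CorrelatedEqPolytope X1 X2)).direction
        < 2 * n - 1) := by
  have : Nontrivial (Fin n) := Fin.nontrivial_iff_two_le.mpr hn
  obtain ⟨k', hk'⟩ := exists_ne m
  have column_m_vanishes (hpos : ∀ (i : Fin 2) (k : Fin n), k ≠ m → 0 < X2 i k - X2 i m)
      (p : Fin 2 → Fin n → ℝ) (hp : p ∈ CorrelatedEqPolytope X1 X2) (i : Fin 2) : p i m = 0 :=
    CorrelatedEqPolytope.eq_zero_of_strictly_dominated hp (l := k')
      (fun i => by linarith [hpos i k' hk']) i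
  have column_vanishes (hneg : ∀ (i : Fin 2) (k : Fin n), k ≠ m → X2 i k - X2 i m < 0)
      (p : Fin 2 → Fin n → ℝ) (hp : p ∈ CorrelatedEqPolytope X1 X2) (k : Fin n) (hk : k ≠ m)
      (i : Fin 2) : p i k = 0 :=
    CorrelatedEqPolytope.eq_zero_of_strictly_dominated hp (hneg · k hk) i
  refine ⟨fun h p hp => ⟨column_m_vanishes h p hp 0, column_m_vanishes h p hp 1⟩,
    fun h p hp k hk => ⟨column_vanishes h p hp k hk 0, column_vanishes h p hp k hk 1⟩, ?_⟩
  have htotal : ∀ p ∈ CorrelatedEqPolytope X1 X2, ∑ j, ∑ k, p j k = 1 := fun _ hp => hp.2.1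
  rintro (h | h)
  · exact finrank_direction_affineSpan_lt_of_entry_eq_zero (column_m_vanishes h · · 0) htotal
  · exact finrank_direction_affineSpan_lt_of_entry_eq_zero
      (column_vanishes h · · k' hk' 0) htotal
end
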